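/- For every vector b ∈ ℝ², the function φ(y) = g(|y|) (b·y)/|y| satisfies Δφ(y) + |y|^{2α} V₀ e^{U(|y|)} φ(y) = −(b·y) |y|^{2α} e^{U(|y|)} for all y ∈ ℝ² \ {0}, where Δ is the Laplacian on ℝ². -/

import Mathlib

open MeasureTheory Metric Real Filter
open scoped RealInnerProductSpace Topology

noncomputable section

/-- `ℝ²`, realized as the Euclidean space on `Fin 2`. -/
abbrev R2 : Type := EuclideanSpace ℝ (Fin 2)

/-- The Laplacian of `u : ℝ² → ℝ` at `x`. -/
def lap (u : R2 → ℝ) (x : R2) : ℝ :=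
  ∑ j : Fin 2, fderiv ℝ (fun y => fderiv ℝ u y (EuclideanSpace.single j 1)) x
    (EuclideanSpace.single j 1)

/-- `a = V₀/(8(1+α)²)`. -/
def aconst (α V0 : ℝ) : ℝ := V0 / (8 * (1 + α) ^ 2)

/-- `U(r) = -2 log(1 + a r^{2α+2})`. -/
def U1 (α V0 r : ℝ) : ℝ := -2 * Real.log (1 + aconst α V0 * r ^ (2 * α + 2))

/-- `g(r) = -(2(1+α)/(α V₀)) r/(1 + a r^{2α+2})`. -/
def g1 (α V0 r : ℝ) : ℝ :=
  -(2 * (1 + α) / (α * V0)) * r / (1 + aconst α V0 * r ^ (2 * α + 2))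

/-!
Write `φ(y) = ⟪b, y⟫ G(‖y‖²)` with `G(s) = C / (1 + a s^{α+1})`, `C = -2(1+α)/(αV₀)`; working in
`s = ‖y‖²` keeps everything smooth away from the origin. For any such profile the planar
Laplacian is `⟪b, y⟫ (8 G'(s) + 4 s G''(s))`, so the equation reduces to the scalar ODE
`8 G' + 4 s G'' + V₀ s^α G / D² = -s^α / D²` with `D = 1 + a s^{α+1}`. Since `C a (α+1) = -1/(4α)`,
`G' = s^α / (4α D²)`, and the ODE becomes an identity between rational functions of `s^α`.
-/

section RadialCalculus

variable {E : Type*} [NormedAddCommGroup E] [InnerProductSpace ℝ E]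
  {f f' f'' : ℝ → ℝ}

theorem hasFDerivAt_comp_norm_sq {z : E} (hf : HasDerivAt f (f' (‖z‖ ^ 2)) (‖z‖ ^ 2)) :
    HasFDerivAt (fun w : E => f (‖w‖ ^ 2)) ((2 * f' (‖z‖ ^ 2)) • innerSL ℝ z) z := by
  refine (hf.comp_hasFDerivAt z (hasStrictFDerivAt_norm_sq z).hasFDerivAt).congr_fderiv ?_
  ext v
  simp
  ring

theorem fderiv_inner_mul_comp_norm_sq_apply (b v : E) {z : E}
    (hf : HasDerivAt f (f' (‖z‖ ^ 2)) (‖z‖ ^ 2)) :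
    fderiv ℝ (fun w => ⟪b, w⟫ * f (‖w‖ ^ 2)) z v
      = ⟪b, v⟫ * f (‖z‖ ^ 2) + ⟪b, z⟫ * (2 * f' (‖z‖ ^ 2) * ⟪z, v⟫) := by
  have h : HasFDerivAt (fun w => ⟪b, w⟫ * f (‖w‖ ^ 2)) _ z :=
    (innerSL ℝ b).hasFDerivAt.mul (hasFDerivAt_comp_norm_sq hf)
  rw [h.fderiv]
  simp
  ring

theorem fderiv_fderiv_inner_mul_comp_norm_sq_apply (b v : E) {y : E} (hy : y ≠ 0)
    (hf : ∀ s, 0 < s → HasDerivAt f (f' s) s) (hf' : ∀ s, 0 < s → HasDerivAt f' (f'' s) s) :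
    fderiv ℝ (fun z => fderiv ℝ (fun w => ⟪b, w⟫ * f (‖w‖ ^ 2)) z v) y v
      = 4 * ⟪b, v⟫ * ⟪y, v⟫ * f' (‖y‖ ^ 2)
        + ⟪b, y⟫ * (4 * ⟪y, v⟫ ^ 2 * f'' (‖y‖ ^ 2) + 2 * ‖v‖ ^ 2 * f' (‖y‖ ^ 2)) := by
  have hpos : ∀ z : E, z ≠ 0 → 0 < ‖z‖ ^ 2 := fun z hz => by positivity
  have hfirst : (fun z => fderiv ℝ (fun w => ⟪b, w⟫ * f (‖w‖ ^ 2)) z v) =ᶠ[𝓝 y]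
      fun z => ⟪b, v⟫ * f (‖z‖ ^ 2) + ⟪b, z⟫ * (2 * f' (‖z‖ ^ 2) * ⟪z, v⟫) := by
    filter_upwards [compl_singleton_mem_nhds hy] with z hz
    exact fderiv_inner_mul_comp_norm_sq_apply b v (hf _ (hpos z hz))
  have hsecond : HasFDerivAt
      (fun z => ⟪b, v⟫ * f (‖z‖ ^ 2) + ⟪b, z⟫ * (2 * f' (‖z‖ ^ 2) * ⟪z, v⟫)) _ y :=
    ((hasFDerivAt_comp_norm_sq (hf _ (hpos y hy))).const_mul ⟪b, v⟫).add
    ((innerSL ℝ b).hasFDerivAt.mul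
      (((hasFDerivAt_comp_norm_sq (hf' _ (hpos y hy))).const_mul 2).mul
        ((hasFDerivAt_id y).inner ℝ (hasFDerivAt_const v y))))
  rw [hfirst.fderiv_eq, hsecond.fderiv]
  simp
  ring

theorem sum_fderiv_fderiv_inner_mul_comp_norm_sq {ι : Type*} [Fintype ι]
    (e : OrthonormalBasis ι ℝ E) (b : E) {y : E} (hy : y ≠ 0)
    (hf : ∀ s, 0 < s → HasDerivAt f (f' s) s) (hf' : ∀ s, 0 < s → HasDerivAt f' (f'' s) s) :
    ∑ i, fderiv ℝ (fun z => fderiv ℝ (fun w => ⟪b, w⟫ * f (‖w‖ ^ 2)) z (e i)) y (e i)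
      = ⟪b, y⟫ * ((2 * Fintype.card ι + 4) * f' (‖y‖ ^ 2) + 4 * ‖y‖ ^ 2 * f'' (‖y‖ ^ 2)) := by
  have hdiag : ∑ i, ⟪b, e i⟫ * ⟪y, e i⟫ = ⟪b, y⟫ := by
    simpa only [real_inner_comm y] using e.sum_inner_mul_inner b y
  simp only [fderiv_fderiv_inner_mul_comp_norm_sq_apply b _ hy hf hf', e.orthonormal.1, one_pow,
    mul_one, Finset.sum_add_distrib, ← Finset.sum_mul, ← Finset.mul_sum, e.sum_sq_inner_left,
    Finset.sum_const, Finset.card_univ, nsmul_eq_mul]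
  simp only [mul_assoc, ← Finset.mul_sum, hdiag]
  ring

end RadialCalculus

theorem lap_inner_mul_comp_norm_sq (b : R2) {f f' f'' : ℝ → ℝ} {y : R2} (hy : y ≠ 0)
    (hf : ∀ s, 0 < s → HasDerivAt f (f' s) s) (hf' : ∀ s, 0 < s → HasDerivAt f' (f'' s) s) :
    lap (fun w => ⟪b, w⟫ * f (‖w‖ ^ 2)) y
      = ⟪b, y⟫ * (8 * f' (‖y‖ ^ 2) + 4 * ‖y‖ ^ 2 * f'' (‖y‖ ^ 2)) := by
  have hsum :=
    sum_fderiv_fderiv_inner_mul_comp_norm_sq (EuclideanSpace.basisFun (Fin 2) ℝ) b hy hf hf'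
  simp only [EuclideanSpace.basisFun_apply, Fintype.card_fin] at hsum
  rw [lap, hsum]
  norm_num

theorem Real.rpow_two_mul {x : ℝ} (hx : 0 ≤ x) (z : ℝ) : x ^ (2 * z) = (x ^ 2) ^ z := by
  exact_mod_cast Real.rpow_natCast_mul hx 2 z

def den1 (α V0 s : ℝ) : ℝ := 1 + aconst α V0 * s ^ (α + 1)

def profile1 (α V0 s : ℝ) : ℝ := -(2 * (1 + α) / (α * V0)) / den1 α V0 s

def profile1Deriv (α V0 s : ℝ) : ℝ := s ^ α / (4 * α * den1 α V0 s ^ 2)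

def profile1Deriv2 (α V0 s : ℝ) : ℝ :=
  (α * s ^ (α - 1) * den1 α V0 s - 2 * aconst α V0 * (α + 1) * (s ^ α) ^ 2)
    / (4 * α * den1 α V0 s ^ 3)

variable {α V0 : ℝ}

theorem den1_pos (hV0 : 0 ≤ V0) {s : ℝ} (hs : 0 ≤ s) : 0 < den1 α V0 s := by
  unfold den1 aconst
  positivity

theorem hasDerivAt_den1 {s : ℝ} (hs : 0 < s) :
    HasDerivAt (den1 α V0) (aconst α V0 * (α + 1) * s ^ α) s := by
  refine (((Real.hasDerivAt_rpow_const (p := α + 1) (Or.inl hs.ne')).const_mul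
    (aconst α V0)).const_add 1).congr_deriv ?_
  rw [add_sub_cancel_right]
  ring

theorem hasDerivAt_profile1 (hα : 0 < α) (hV0 : 0 < V0) {s : ℝ} (hs : 0 < s) :
    HasDerivAt (profile1 α V0) (profile1Deriv α V0 s) s := by
  have hD := den1_pos (α := α) hV0.le hs.le
  refine ((hasDerivAt_const s _).div (hasDerivAt_den1 hs) hD.ne').congr_deriv ?_
  unfold profile1Deriv aconst
  field_simp
  ring

theorem hasDerivAt_profile1Deriv (hα : 0 < α) (hV0 : 0 < V0) {s : ℝ} (hs : 0 < s) :
    HasDerivAt (profile1Deriv α V0) (profile1Deriv2 α V0 s) s := by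
  have hD := den1_pos (α := α) hV0.le hs.le
  refine ((Real.hasDerivAt_rpow_const (p := α) (Or.inl hs.ne')).div
    (((hasDerivAt_den1 hs).fun_pow 2).const_mul (4 * α)) (by positivity)).congr_deriv ?_
  unfold profile1Deriv2
  field_simp
  ring

theorem profile1_ode (hα : 0 < α) (hV0 : 0 < V0) {s : ℝ} (hs : 0 < s) :
    8 * profile1Deriv α V0 s + 4 * s * profile1Deriv2 α V0 s
      + s ^ α * V0 * (den1 α V0 s)⁻¹ ^ 2 * profile1 α V0 s
      = -(s ^ α * (den1 α V0 s)⁻¹ ^ 2) := by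
  have hD := den1_pos (α := α) hV0.le hs.le
  unfold profile1Deriv profile1Deriv2 profile1
  rw [Real.rpow_sub_one hs.ne']
  unfold den1 aconst at hD ⊢
  rw [Real.rpow_add_one hs.ne'] at hD ⊢
  field_simp
  ring

theorem g1_eq_mul_profile1 {r : ℝ} (hr : 0 ≤ r) : g1 α V0 r = r * profile1 α V0 (r ^ 2) := by
  rw [g1, profile1, den1, ← Real.rpow_two_mul hr]
  ring_nf

theorem exp_U1 (hV0 : 0 ≤ V0) {r : ℝ} (hr : 0 ≤ r) :
    Real.exp (U1 α V0 r) = (den1 α V0 (r ^ 2))⁻¹ ^ 2 := by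
  have hU : U1 α V0 r = -Real.log (den1 α V0 (r ^ 2) ^ 2) := by
    rw [U1, Real.log_pow, den1, ← Real.rpow_two_mul hr]
    push_cast
    ring_nf
  rw [hU, Real.exp_neg, Real.exp_log (pow_pos (den1_pos hV0 (sq_nonneg r)) 2), inv_pow]

theorem g1_norm_mul_inner_div_norm (b w : R2) :
    g1 α V0 ‖w‖ * (⟪b, w⟫ / ‖w‖) = ⟪b, w⟫ * profile1 α V0 (‖w‖ ^ 2) := by
  rcases eq_or_ne w 0 with rfl | hw
  · simp
  · rw [g1_eq_mul_profile1 (norm_nonneg w)]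
    field_simp

/-- Equation (2.10): `φ(y) = g(|y|)(b·y)/|y|` solves the linearized equation with
right-hand side `-(b·y)|y|^{2α} e^{U}`. -/
theorem phi_solves_linearized_equation (α V0 : ℝ) (hα : 0 < α) (hV0 : 0 < V0) (b : R2) :
    ∀ y : R2, y ≠ 0 →
      lap (fun w => g1 α V0 ‖w‖ * (⟪b, w⟫ / ‖w‖)) y
        + ‖y‖ ^ (2 * α) * V0 * Real.exp (U1 α V0 ‖y‖) *
            (g1 α V0 ‖y‖ * (⟪b, y⟫ / ‖y‖))
        = -(⟪b, y⟫ * ‖y‖ ^ (2 * α) * Real.exp (U1 α V0 ‖y‖)) := by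
  intro y hy
  have hs : 0 < ‖y‖ ^ 2 := by positivity
  simp only [g1_norm_mul_inner_div_norm]
  rw [lap_inner_mul_comp_norm_sq b hy (fun s => hasDerivAt_profile1 hα hV0)
      (fun s => hasDerivAt_profile1Deriv hα hV0),
    exp_U1 hV0.le (norm_nonneg y), Real.rpow_two_mul (norm_nonneg y)]
  linear_combination ⟪b, y⟫ * profile1_ode hα hV0 hs
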